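/- For every x ∈ S, the principal quasi-ideal of x in Σ coincides with the principal quasi-ideal of x in the Γ-semigroup S: (x)_ℓ^Σ ∩ (x)_r^Σ = (x)_ℓ^Γ ∩ (x)_r^Γ, where (x)_ℓ^Γ = SΓx ∪ {x} and (x)_r^Γ = xΓS ∪ {x}. -/
import Mathlib


open FreeSemigroup

section GammaSemigroup

variable {S Γ : Type}

/-- One-step rewriting on words over S ⊕ Γ. -/
inductive GStep (m : S → Γ → S → S) (γ₀ : Γ) : List (S ⊕ Γ) → List (S ⊕ Γ) → Prop
  | gg (u v : List (S ⊕ Γ)) (γ₁ γ₂ : Γ) :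
      GStep m γ₀ (u ++ Sum.inr γ₁ :: Sum.inr γ₂ :: v) (u ++ Sum.inr γ₁ :: v)
  | xgy (u v : List (S ⊕ Γ)) (x : S) (γ : Γ) (y : S) :
      GStep m γ₀ (u ++ Sum.inl x :: Sum.inr γ :: Sum.inl y :: v) (u ++ Sum.inl (m x γ y) :: v)
  | xy (u v : List (S ⊕ Γ)) (x y : S) :
      GStep m γ₀ (u ++ Sum.inl x :: Sum.inl y :: v) (u ++ Sum.inl (m x γ₀ y) :: v)

/-- The defining relations on the free semigroup on S ⊕ Γ. -/
def GRel (m : S → Γ → S → S) (γ₀ : Γ) :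
    FreeSemigroup (S ⊕ Γ) → FreeSemigroup (S ⊕ Γ) → Prop :=
  fun a b =>
    (∃ γ₁ γ₂ : Γ, a = of (Sum.inr γ₁) * of (Sum.inr γ₂) ∧ b = of (Sum.inr γ₁)) ∨
    (∃ (x y : S) (γ : Γ), a = of (Sum.inl x) * of (Sum.inr γ) * of (Sum.inl y) ∧
      b = of (Sum.inl (m x γ y))) ∨
    (∃ x y : S, a = of (Sum.inl x) * of (Sum.inl y) ∧ b = of (Sum.inl (m x γ₀ y)))

/-- The congruence generated by the defining relations. -/
def GCon (m : S → Γ → S → S) (γ₀ : Γ) : Con (FreeSemigroup (S ⊕ Γ)) := conGen (GRel m γ₀)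

/-- The universal semigroup Σ of the Γ-semigroup S. -/
abbrev USem (m : S → Γ → S → S) (γ₀ : Γ) := (GCon m γ₀).Quotient

/-- The canonical map μ : S → Σ. -/
def gmu (m : S → Γ → S → S) (γ₀ : Γ) (x : S) : USem m γ₀ :=
  ((of (Sum.inl x) : FreeSemigroup (S ⊕ Γ)) : (GCon m γ₀).Quotient)

/-- The canonical map Γ → Σ. -/
def giota (m : S → Γ → S → S) (γ₀ : Γ) (γ : Γ) : USem m γ₀ :=
  ((of (Sum.inr γ) : FreeSemigroup (S ⊕ Γ)) : (GCon m γ₀).Quotient)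

/-- Principal left ideal of an element of a semigroup. -/
def pLeft {T : Type} [Semigroup T] (a : T) : Set T := {w | ∃ t : T, w = t * a} ∪ {a}

/-- Principal right ideal of an element of a semigroup. -/
def pRight {T : Type} [Semigroup T] (a : T) : Set T := {w | ∃ t : T, w = a * t} ∪ {a}

/-- Principal left ideal in the Γ-semigroup: SΓx ∪ {x}. -/
def pLeftG (m : S → Γ → S → S) (x : S) : Set S := {y | ∃ (s : S) (γ : Γ), y = m s γ x} ∪ {x}

/-- Principal right ideal in the Γ-semigroup: xΓS ∪ {x}. -/
def pRightG (m : S → Γ → S → S) (x : S) : Set S := {y | ∃ (γ : Γ) (s : S), y = m x γ s} ∪ {x}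

/-- Green's H relation on the Γ-semigroup. -/
def HrelG (m : S → Γ → S → S) (a b : S) : Prop := pLeftG m a = pLeftG m b ∧ pRightG m a = pRightG m b

/-- S_δ is a simple semigroup: its only two-sided ideal is S itself. -/
def SimpleAt (m : S → Γ → S → S) (δ : Γ) : Prop :=
  ∀ J : Set S, J.Nonempty → (∀ t : S, ∀ j ∈ J, m t δ j ∈ J ∧ m j δ t ∈ J) → J = Set.univ

/-- e is an idempotent of S_δ. -/
def IdemAt (m : S → Γ → S → S) (δ : Γ) (e : S) : Prop := m e δ e = e

/-- e is a primitive idempotent of S_δ. -/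
def PrimAt (m : S → Γ → S → S) (δ : Γ) (e : S) : Prop :=
  IdemAt m δ e ∧ ∀ f, IdemAt m δ f → m e δ f = f → m f δ e = f → f = e

/-- S_δ is completely simple. -/
def CSimpleAt (m : S → Γ → S → S) (δ : Γ) : Prop := SimpleAt m δ ∧ ∃ e, PrimAt m δ e

/-- S_δ has no zero element. -/
def NoZeroAt (m : S → Γ → S → S) (δ : Γ) : Prop := ¬ ∃ z : S, ∀ t : S, m z δ t = z ∧ m t δ z = z

/-- L is a left ideal of S_δ. -/
def LIdealAt (m : S → Γ → S → S) (δ : Γ) (L : Set S) : Prop :=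
  L.Nonempty ∧ ∀ t : S, ∀ l ∈ L, m t δ l ∈ L

/-- L is a minimal left ideal of S_δ. -/
def MinLIdealAt (m : S → Γ → S → S) (δ : Γ) (L : Set S) : Prop :=
  LIdealAt m δ L ∧ ∀ L' ⊆ L, LIdealAt m δ L' → L' = L

/-- S_δ is a group. -/
def GroupAt (m : S → Γ → S → S) (δ : Γ) : Prop :=
  ∃ e : S, (∀ a, m e δ a = a ∧ m a δ e = a) ∧ ∀ a, ∃ b, m a δ b = e ∧ m b δ a = e

/-- G is a subgroup (a sub-semigroup that is a group) of the semigroup T. -/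
def IsSubgroupOf {T : Type} [Semigroup T] (G : Set T) : Prop :=
  (∀ a ∈ G, ∀ b ∈ G, a * b ∈ G) ∧
  ∃ e ∈ G, (∀ g ∈ G, e * g = g ∧ g * e = g) ∧ ∀ g ∈ G, ∃ h ∈ G, g * h = e ∧ h * g = e

/-- The set Σ' = Σ \ Γ. -/
def USem' (m : S → Γ → S → S) (γ₀ : Γ) : Set (USem m γ₀) := {w | ¬ ∃ γ : Γ, w = giota m γ₀ γ}

end GammaSemigroup

namespace GSAux

variable {S Γ : Type}

abbrev MM (S Γ : Type) : Type := (Option Γ × S × Option Γ) ⊕ Γ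

def mmul (m : S → Γ → S → S) (γ₀ : Γ) : MM S Γ → MM S Γ → MM S Γ
  | Sum.inl (l, s, r), Sum.inl (l', s', r') => Sum.inl (l, m s ((r.or l').getD γ₀) s', r')
  | Sum.inl (l, s, r), Sum.inr γ => Sum.inl (l, s, some (r.getD γ))
  | Sum.inr γ, Sum.inl (_, s, r) => Sum.inl (some γ, s, r)
  | Sum.inr γ, Sum.inr _ => Sum.inr γ

theorem mmul_assoc (m : S → Γ → S → S) (γ₀ : Γ)
    (assoc : ∀ (a b c : S) (α β : Γ), m (m a α b) β c = m a α (m b β c))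
    (a b c : MM S Γ) : mmul m γ₀ (mmul m γ₀ a b) c = mmul m γ₀ a (mmul m γ₀ b c) := by
  rcases a with ⟨l, s, r⟩ | γ <;> rcases b with ⟨l', s', r'⟩ | γ' <;>
    rcases c with ⟨l'', s'', r''⟩ | γ'' <;>
    simp only [mmul] <;>
    first
    | rfl
    | (cases r <;> simp [assoc])

-- relations in USem
theorem gmu_mul (m : S → Γ → S → S) (γ₀ : Γ) (a b : S) :
    gmu m γ₀ a * gmu m γ₀ b = gmu m γ₀ (m a γ₀ b) := by
  unfold gmu
  rw [← Con.coe_mul]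
  exact (GCon m γ₀).eq.2 (ConGen.Rel.of _ _ (Or.inr (Or.inr ⟨a, b, rfl, rfl⟩)))

theorem giota_mul (m : S → Γ → S → S) (γ₀ : Γ) (γ γ' : Γ) :
    giota m γ₀ γ * giota m γ₀ γ' = giota m γ₀ γ := by
  unfold giota
  rw [← Con.coe_mul]
  exact (GCon m γ₀).eq.2 (ConGen.Rel.of _ _ (Or.inl ⟨γ, γ', rfl, rfl⟩))

theorem gmu_g_mul (m : S → Γ → S → S) (γ₀ : Γ) (a b : S) (γ : Γ) :
    gmu m γ₀ a * (giota m γ₀ γ * gmu m γ₀ b) = gmu m γ₀ (m a γ b) := by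
  rw [← mul_assoc]
  unfold gmu giota
  rw [← Con.coe_mul, ← Con.coe_mul]
  exact (GCon m γ₀).eq.2 (ConGen.Rel.of _ _ (Or.inr (Or.inl ⟨a, b, γ, rfl, rfl⟩)))

-- primed versions with a trailing element
theorem gmu_mul' (m : S → Γ → S → S) (γ₀ : Γ) (a b : S) (t : USem m γ₀) :
    gmu m γ₀ a * (gmu m γ₀ b * t) = gmu m γ₀ (m a γ₀ b) * t := by
  rw [← mul_assoc, gmu_mul]

theorem giota_mul' (m : S → Γ → S → S) (γ₀ : Γ) (γ γ' : Γ) (t : USem m γ₀) :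
    giota m γ₀ γ * (giota m γ₀ γ' * t) = giota m γ₀ γ * t := by
  rw [← mul_assoc, giota_mul]

theorem gmu_g_mul' (m : S → Γ → S → S) (γ₀ : Γ) (a b : S) (γ : Γ) (t : USem m γ₀) :
    gmu m γ₀ a * (giota m γ₀ γ * (gmu m γ₀ b * t)) = gmu m γ₀ (m a γ b) * t := by
  rw [← mul_assoc, ← mul_assoc, mul_assoc (gmu m γ₀ a), gmu_g_mul]

def rho (m : S → Γ → S → S) (γ₀ : Γ) : MM S Γ → USem m γ₀
  | Sum.inl (none, s, none) => gmu m γ₀ s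
  | Sum.inl (some γ, s, none) => giota m γ₀ γ * gmu m γ₀ s
  | Sum.inl (none, s, some γ) => gmu m γ₀ s * giota m γ₀ γ
  | Sum.inl (some γ, s, some γ') => giota m γ₀ γ * (gmu m γ₀ s * giota m γ₀ γ')
  | Sum.inr γ => giota m γ₀ γ

theorem rho_mul (m : S → Γ → S → S) (γ₀ : Γ) (a b : MM S Γ) :
    rho m γ₀ (mmul m γ₀ a b) = rho m γ₀ a * rho m γ₀ b := by
  rcases a with ⟨(_|l), s, (_|r)⟩ | γ <;> rcases b with ⟨(_|l'), s', (_|r')⟩ | γ' <;>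
    simp [mmul, rho, mul_assoc, gmu_mul, gmu_mul', giota_mul, giota_mul', gmu_g_mul, gmu_g_mul']

end GSAux



theorem stmt (S Γ : Type) [Nonempty S] [Nonempty Γ] (m : S → Γ → S → S)
    (assoc : ∀ (a b c : S) (α β : Γ), m (m a α b) β c = m a α (m b β c)) (γ₀ : Γ) (x : S) :
    pLeft (gmu m γ₀ x) ∩ pRight (gmu m γ₀ x) =
      gmu m γ₀ '' (pLeftG m x ∩ pRightG m x) := by
  classical
  letI : Mul (GSAux.MM S Γ) := ⟨GSAux.mmul m γ₀⟩
  letI : Semigroup (GSAux.MM S Γ) :=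
    { mul_assoc := GSAux.mmul_assoc m γ₀ assoc }
  set gen : S ⊕ Γ → GSAux.MM S Γ :=
    Sum.elim (fun y => Sum.inl (none, y, none)) Sum.inr with hgen
  set F : FreeSemigroup (S ⊕ Γ) →ₙ* GSAux.MM S Γ := FreeSemigroup.lift gen with hF
  have Frel : ∀ a b : FreeSemigroup (S ⊕ Γ), GRel m γ₀ a b → F a = F b := by
    rintro a b (⟨γ₁, γ₂, rfl, rfl⟩ | ⟨y, z, γ, rfl, rfl⟩ | ⟨y, z, rfl, rfl⟩) <;>
      simp only [hF, map_mul, FreeSemigroup.lift_of, hgen, Sum.elim_inl, Sum.elim_inr] <;> rfl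
  have Fcon : ∀ a b : FreeSemigroup (S ⊕ Γ), (GCon m γ₀) a b → F a = F b := by
    intro a b h
    induction h with
    | of u v huv => exact Frel u v huv
    | refl => rfl
    | symm _ ih => exact ih.symm
    | trans _ _ ih1 ih2 => exact ih1.trans ih2
    | mul _ _ ih1 ih2 => rw [map_mul, map_mul, ih1, ih2]
  set psi : USem m γ₀ → GSAux.MM S Γ := fun w => Con.liftOn w F Fcon with hpsi
  have psi_coe : ∀ f : FreeSemigroup (S ⊕ Γ), psi (f : USem m γ₀) = F f := fun _ => rfl
  have psi_mul : ∀ u v : USem m γ₀, psi (u * v) = GSAux.mmul m γ₀ (psi u) (psi v) := by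
    intro u v
    obtain ⟨a, rfl⟩ := Quot.exists_rep u
    obtain ⟨b, rfl⟩ := Quot.exists_rep v
    show F (a * b) = GSAux.mmul m γ₀ (F a) (F b)
    exact map_mul F a b
  have round : ∀ w : USem m γ₀, GSAux.rho m γ₀ (psi w) = w := by
    intro w
    obtain ⟨a, rfl⟩ := Quot.exists_rep w
    show GSAux.rho m γ₀ (psi (a : USem m γ₀)) = (a : USem m γ₀)
    induction a using FreeSemigroup.recOnMul with
    | ih1 z =>
      rcases z with y | γ <;> rw [psi_coe] <;>
        simp [hF, FreeSemigroup.lift_of, hgen] <;> rfl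
    | ih2 z y ihz ihy =>
      rw [Con.coe_mul, psi_mul, GSAux.rho_mul, ihz, ihy]
  have psi_gmu : ∀ y : S, psi (gmu m γ₀ y) = Sum.inl (none, y, none) := by
    intro y; rw [gmu, psi_coe]; simp [hF, FreeSemigroup.lift_of, hgen]
  ext w
  constructor
  · rintro ⟨hl, hr⟩
    rcases hl with ⟨t, rfl⟩ | hl
    · rcases hr with ⟨t', ht'⟩ | hr
      · have e1 := psi_mul t (gmu m γ₀ x)
        have e2 : psi (t * gmu m γ₀ x) = GSAux.mmul m γ₀ (psi (gmu m γ₀ x)) (psi t') := by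
          rw [ht', psi_mul]
        rw [psi_gmu] at e1 e2
        rcases h1 : psi t with ⟨l, s, r⟩ | γ
        · have e3 : GSAux.mmul m γ₀ (Sum.inl (l, s, r)) (Sum.inl (none, x, none))
              = Sum.inl (l, m s (r.getD γ₀) x, none) := by simp [GSAux.mmul]
          rw [h1, e3] at e1
          rcases h2 : psi t' with ⟨l', s', r'⟩ | γ'
          · rw [h2] at e2
            have e4 : GSAux.mmul m γ₀ (Sum.inl (none, x, none)) (Sum.inl (l', s', r'))
                = Sum.inl (none, m x (l'.getD γ₀) s', r') := by simp [GSAux.mmul]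
            rw [e4, e1] at e2
            obtain ⟨hl0, hmid, hr0⟩ :
                l = none ∧ m s (r.getD γ₀) x = m x (l'.getD γ₀) s' ∧ (none : Option Γ) = r' := by
              simpa using e2
            refine ⟨m s (r.getD γ₀) x,
              ⟨Or.inl ⟨s, r.getD γ₀, rfl⟩, Or.inl ⟨l'.getD γ₀, s', hmid⟩⟩, ?_⟩
            rw [← round (t * gmu m γ₀ x), e1, hl0]
            rfl
          · rw [h2] at e2; rw [e1] at e2; simp [GSAux.mmul] at e2
        · rw [h1] at e1
          have e3 : GSAux.mmul m γ₀ (Sum.inr γ) (Sum.inl (none, x, none))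
              = Sum.inl (some γ, x, none) := rfl
          rw [e3] at e1
          rcases h2 : psi t' with ⟨l', s', r'⟩ | γ' <;> rw [h2] at e2 <;> rw [e1] at e2 <;>
            simp [GSAux.mmul] at e2
      · have hw : t * gmu m γ₀ x = gmu m γ₀ x := hr
        exact ⟨x, ⟨Or.inr rfl, Or.inr rfl⟩, hw.symm⟩
    · have hw : w = gmu m γ₀ x := hl
      exact ⟨x, ⟨Or.inr rfl, Or.inr rfl⟩, hw.symm⟩
  · rintro ⟨y, ⟨hyl, hyr⟩, rfl⟩
    constructor
    · rcases hyl with ⟨s, γ, rfl⟩ | rfl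
      · exact Or.inl ⟨gmu m γ₀ s * giota m γ₀ γ, by rw [mul_assoc, GSAux.gmu_g_mul]⟩
      · exact Or.inr rfl
    · rcases hyr with ⟨γ, s, rfl⟩ | rfl
      · exact Or.inl ⟨giota m γ₀ γ * gmu m γ₀ s, by rw [GSAux.gmu_g_mul]⟩
      · exact Or.inr rfl
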